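/- Let {R,F} be a compatible pair of R-matrices on V⊗V, V = ℂ^N, let A be an associative unital ℂ-algebra, let η ∈ ℂ∖{0}, and let L, M ∈ Mat_N(A) satisfy the operator-function permutation relation R₁L₁R₁M₁ = η·M₁L_{2̄} in Mat_{N²}(A), where L_{2̄} = F₁L₁F₁⁻¹. Then for every k ≥ 1 the shifted relation holds: R_k L_{k̄} R_k M_{k̄} = η·M_{k̄} L_{k+1‾} in Mat_{N^{k+1}}(A), where the copies are defined by X_{1̄} = X₁ and X_{k+1‾} = F_k X_{k̄} F_k⁻¹. -/

import Mathlib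

open Matrix BigOperators

/-- `X₁ = X ⊗ id` acting on the factors 1,2 of `(ℂ^N)^{⊗3}`. -/
noncomputable def up12 {N : ℕ} (X : Matrix (Fin N × Fin N) (Fin N × Fin N) ℂ) :
    Matrix (Fin N × Fin N × Fin N) (Fin N × Fin N × Fin N) ℂ :=
  Matrix.of fun p q => X (p.1, p.2.1) (q.1, q.2.1) * (if p.2.2 = q.2.2 then 1 else 0)

/-- `X₂ = id ⊗ X` acting on the factors 2,3 of `(ℂ^N)^{⊗3}`. -/
noncomputable def up23 {N : ℕ} (X : Matrix (Fin N × Fin N) (Fin N × Fin N) ℂ) :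
    Matrix (Fin N × Fin N × Fin N) (Fin N × Fin N × Fin N) ℂ :=
  Matrix.of fun p q => (if p.1 = q.1 then 1 else 0) * X (p.2.1, p.2.2) (q.2.1, q.2.2)

/-- `X₁ = X ⊗ I_N` on two tensor factors, for a matrix over an algebra `A`. -/
def lift1 {N : ℕ} {A : Type} [Ring A] (X : Matrix (Fin N) (Fin N) A) :
    Matrix (Fin N × Fin N) (Fin N × Fin N) A :=
  Matrix.of fun p q => X p.1 q.1 * (if p.2 = q.2 then 1 else 0)

/-- A matrix `X ∈ Mat_N(A)` placed in the (0-indexed) tensor factor `p`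
of `V^{⊗k}`, acting as the identity elsewhere. -/
def liftV {N : ℕ} {A : Type} [Ring A] (k : ℕ) (X : Matrix (Fin N) (Fin N) A)
    (p : ℕ) : Matrix (Fin k → Fin N) (Fin k → Fin N) A :=
  Matrix.of fun v w =>
    if h : p < k then
      X (v ⟨p, h⟩) (w ⟨p, h⟩) *
        (if ∀ j : Fin k, (j : ℕ) ≠ p → v j = w j then 1 else 0)
    else (if v = w then 1 else 0)

/-- A matrix `X ∈ Mat_{N²}(A)` placed in the (0-indexed) tensor factors
`p, p+1` of `V^{⊗k}`; this is the operator `X_{p+1}` in 1-indexed notation. -/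
def lift2 {N : ℕ} {A : Type} [Ring A] (k : ℕ)
    (X : Matrix (Fin N × Fin N) (Fin N × Fin N) A) (p : ℕ) :
    Matrix (Fin k → Fin N) (Fin k → Fin N) A :=
  Matrix.of fun v w =>
    if h : p + 1 < k then
      X (v ⟨p, Nat.lt_of_succ_lt h⟩, v ⟨p + 1, h⟩)
          (w ⟨p, Nat.lt_of_succ_lt h⟩, w ⟨p + 1, h⟩) *
        (if ∀ j : Fin k, (j : ℕ) ≠ p → (j : ℕ) ≠ p + 1 → v j = w j then 1 else 0)
    else (if v = w then 1 else 0)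

/-- The `F`-copies of a matrix `X` in `Mat_{N^k}(A)`:
`X_{1̄} = X₁` and `X_{n+2‾} = F_{n+1} X_{n+1‾} F_{n+1}⁻¹` (0-indexed:
`copies k FA FinvA X n` is the copy `X_{n+1‾}`). -/
def copies {N : ℕ} {A : Type} [Ring A] (k : ℕ)
    (FA FinvA : Matrix (Fin N × Fin N) (Fin N × Fin N) A)
    (X : Matrix (Fin N) (Fin N) A) :
    ℕ → Matrix (Fin k → Fin N) (Fin k → Fin N) A
  | 0 => liftV k X 0
  | n + 1 => lift2 k FA n * copies k FA FinvA X n * lift2 k FinvA n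

/-!
Write `X ↦ X_I` for placing a matrix on a set `I` of tensor legs of `V^{⊗n}`. This is
multiplicative (it is `X ⊗ 1` up to reindexing), compatible with composing leg embeddings, and
matrices on disjoint legs commute as soon as the entries of one of them are central. Hence the
relation on `V^{⊗2}` and the braid and compatibility relations on `V^{⊗3}` hold at any legs.

The shifted relation is then proved by induction on `k`, conjugating the relation at `k` by
`F_k F_{k+1}`: the compatibility `F_k F_{k+1} R_k = R_{k+1} F_k F_{k+1}` turns `R_k` into `R_{k+1}`;
since `F_{k+1}` commutes with `L_{k̄}` and `M_{k̄}` (which live on the legs `1, …, k`), these become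
`L_{k+1‾}` and `M_{k+1‾}`; and by the braid relation `F_k F_{k+1} F_k = F_{k+1} F_k F_{k+1}` the
conjugate of `L_{k+1‾}` is `F_{k+1} L_{k+1‾} F_{k+1}⁻¹ = L_{k+2‾}`.
-/

section Legs

variable {α : Type*} {I J K : Type*} [Fintype I] [DecidableEq J]

noncomputable def Function.Embedding.legSplit (ι : I ↪ J) :
    (J → α) ≃ (I → α) × ({j // j ∉ Set.range ι} → α) :=
  (Equiv.piEquivPiSubtypeProd (· ∈ Set.range ι) fun _ => α).trans
    (Equiv.prodCongr ((Equiv.ofInjective ι ι.injective).symm.arrowCongr (Equiv.refl α))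
      (Equiv.refl _))

lemma Function.Embedding.legSplit_apply (ι : I ↪ J) (v : J → α) :
    ι.legSplit v = (v ∘ ι, fun j : {j // j ∉ Set.range ι} => v j) := rfl

variable [Fintype J] {N : ℕ} {A : Type*} [Ring A]

/-- `X` acting on the tensor legs `ι(I)` of `(A^N)^{⊗J}`: the block-diagonal matrix `X ⊗ 1`,
with one block for each configuration of the remaining legs. -/
noncomputable def onLegs (ι : I ↪ J) (X : Matrix (I → Fin N) (I → Fin N) A) :
    Matrix (J → Fin N) (J → Fin N) A :=
  (blockDiagonal fun _ => X).submatrix ι.legSplit ι.legSplit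

lemma onLegs_apply (ι : I ↪ J) (X : Matrix (I → Fin N) (I → Fin N) A) (v w : J → Fin N) :
    onLegs ι X v w = if ∀ j ∉ Set.range ι, v j = w j then X (v ∘ ι) (w ∘ ι) else 0 := by
  simp only [onLegs, submatrix_apply, Function.Embedding.legSplit_apply, blockDiagonal_apply,
    funext_iff, Subtype.forall]

lemma onLegs_mul [DecidableEq I] (ι : I ↪ J) (X Y : Matrix (I → Fin N) (I → Fin N) A) :
    onLegs ι (X * Y) = onLegs ι X * onLegs ι Y := by
  simp only [onLegs, ← blockDiagonal_mul, submatrix_mul_equiv]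

lemma onLegs_one (ι : I ↪ J) :
    onLegs ι (1 : Matrix (I → Fin N) (I → Fin N) A) = 1 := by
  simp only [onLegs, ← Pi.one_def, blockDiagonal_one, submatrix_one_equiv]

lemma onLegs_smul (ι : I ↪ J) (a : A) (X : Matrix (I → Fin N) (I → Fin N) A) :
    onLegs ι (a • X) = a • onLegs ι X := by
  ext v w
  simp only [onLegs_apply, Matrix.smul_apply, smul_ite, smul_zero]

lemma onLegs_map {B : Type*} [Ring B] (ι : I ↪ J) (φ : A →+* B)
    (X : Matrix (I → Fin N) (I → Fin N) A) :
    (onLegs ι X).map φ = onLegs ι (X.map φ) := by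
  rw [onLegs, ← submatrix_map, blockDiagonal_map _ _ (map_zero φ), onLegs]

lemma onLegs_onLegs [DecidableEq I] [Fintype K] (ι : I ↪ J) (κ : K ↪ I)
    (X : Matrix (K → Fin N) (K → Fin N) A) :
    onLegs ι (onLegs κ X) = onLegs (κ.trans ι) X := by
  ext v w
  rw [onLegs_apply, onLegs_apply, onLegs_apply, ← ite_and]
  congr 1
  apply propext
  simp only [Set.mem_range, not_exists, Function.Embedding.trans_apply, Function.comp_apply]
  constructor
  · rintro ⟨hι, hκ⟩ j hj
    by_cases hjι : ∃ i, ι i = j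
    · obtain ⟨i, rfl⟩ := hjι
      exact hκ i fun k hk => hj k (congrArg ι hk)
    · exact hι j fun i hi => hjι ⟨i, hi⟩
  · intro h
    exact ⟨fun j hj => h j fun k => hj (κ k),
      fun i hi => h (ι i) fun k hk => hi k (ι.injective hk)⟩

lemma onLegs_mul_onLegs_apply [Fintype K] {ι : I ↪ J} {κ : K ↪ J}
    (hd : Disjoint (Set.range ι) (Set.range κ)) (X : Matrix (I → Fin N) (I → Fin N) A)
    (Y : Matrix (K → Fin N) (K → Fin N) A) (v w : J → Fin N) :
    (onLegs ι X * onLegs κ Y) v w =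
      if ∀ j ∉ Set.range ι ∪ Set.range κ, v j = w j
      then X (v ∘ ι) (w ∘ ι) * Y (v ∘ κ) (w ∘ κ) else 0 := by
  -- the only intermediate basis vector: `w` on the legs of `ι`, `v` elsewhere
  set u₀ := Function.extend ι (w ∘ ι) v
  have hu₀_off : ∀ j ∉ Set.range ι, u₀ j = v j := fun j hj => Function.extend_apply' _ _ _ hj
  have hu₀ι : u₀ ∘ ι = w ∘ ι := Function.extend_comp ι.injective _ _
  have hu₀κ : u₀ ∘ κ = v ∘ κ :=
    funext fun k => hu₀_off _ (Set.disjoint_right.1 hd (Set.mem_range_self k))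
  rw [mul_apply, Finset.sum_eq_single u₀]
  · simp only [onLegs_apply, hu₀ι, hu₀κ, if_pos fun j hj => (hu₀_off j hj).symm, mul_ite,
      mul_zero]
    congr 1
    apply propext
    constructor
    · intro h j hj
      rw [Set.mem_union, not_or] at hj
      rw [← hu₀_off j hj.1, h j hj.2]
    · intro h j hj
      by_cases hjι : j ∈ Set.range ι
      · obtain ⟨i, rfl⟩ := hjι
        exact congrFun hu₀ι i
      · rw [hu₀_off j hjι, h j (by simp [hjι, hj])]
  · intro u _ hu
    simp only [onLegs_apply]
    split_ifs with hvu huw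
    · refine absurd (funext fun j => ?_) hu
      by_cases hjι : j ∈ Set.range ι
      · obtain ⟨i, rfl⟩ := hjι
        rw [huw _ (Set.disjoint_left.1 hd (Set.mem_range_self i))]
        exact (congrFun hu₀ι i).symm
      · rw [hu₀_off j hjι, hvu j hjι]
    all_goals simp
  · simp

lemma onLegs_commute [Fintype K] {ι : I ↪ J} {κ : K ↪ J} (hd : Disjoint (Set.range ι) (Set.range κ))
    {X : Matrix (I → Fin N) (I → Fin N) A} {Y : Matrix (K → Fin N) (K → Fin N) A}
    (hXY : ∀ a b c d, Commute (X a b) (Y c d)) :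
    Commute (onLegs ι X) (onLegs κ Y) := by
  ext v w
  rw [onLegs_mul_onLegs_apply hd, onLegs_mul_onLegs_apply hd.symm]
  simp only [Set.union_comm (Set.range κ)]
  split_ifs
  · exact (hXY _ _ _ _).eq
  · rfl

end Legs

def finShiftEmb {m n : ℕ} (p : ℕ) (h : p + m ≤ n) : Fin m ↪ Fin n :=
  ⟨fun i => ⟨p + i, by omega⟩, fun i j hij => Fin.ext (by simpa using hij)⟩

@[simp] lemma finShiftEmb_apply {m n : ℕ} (p : ℕ) (h : p + m ≤ n) (i : Fin m) :
    finShiftEmb p h i = ⟨p + i, by omega⟩ := rfl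

lemma mem_range_finShiftEmb {m n : ℕ} (p : ℕ) (h : p + m ≤ n) (j : Fin n) :
    j ∈ Set.range (finShiftEmb p h) ↔ p ≤ j ∧ (j : ℕ) < p + m := by
  constructor
  · rintro ⟨i, rfl⟩
    simp
  · intro hj
    exact ⟨⟨j - p, by omega⟩, Fin.ext (by simp; omega)⟩

lemma finShiftEmb_trans {l m n : ℕ} (q p : ℕ) (hq : q + l ≤ m) (hp : p + m ≤ n) :
    (finShiftEmb q hq).trans (finShiftEmb p hp) = finShiftEmb (p + q) (by omega) := by
  ext i
  simp [add_assoc]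

@[simps]
def finThreeArrowEquiv {α : Type*} : (Fin 3 → α) ≃ α × α × α where
  toFun v := (v 0, v 1, v 2)
  invFun x := ![x.1, x.2.1, x.2.2]
  left_inv v := by ext j; fin_cases j <;> rfl
  right_inv _ := rfl

section Bridges

variable {N : ℕ} {A : Type} [Ring A]

lemma lift2_eq_onLegs (n p : ℕ) (h : p + 2 ≤ n) (X : Matrix (Fin N × Fin N) (Fin N × Fin N) A) :
    lift2 n X p =
      onLegs (finShiftEmb p h) (X.submatrix (finTwoArrowEquiv _) (finTwoArrowEquiv _)) := by
  ext v w
  simp only [lift2, onLegs_apply, of_apply, dif_pos (show p + 1 < n by omega), submatrix_apply,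
    finTwoArrowEquiv_apply, Equiv.toFun_as_coe, piFinTwoEquiv_apply, Function.comp_apply,
    finShiftEmb_apply, mem_range_finShiftEmb, mul_ite, mul_one, mul_zero, Fin.isValue,
    Fin.val_zero, Fin.val_one, add_zero]
  exact if_congr (forall_congr' fun j => ⟨fun H hj => H (by omega) (by omega),
    fun H h₁ h₂ => H (by omega)⟩) rfl rfl

lemma liftV_eq_onLegs (n p : ℕ) (h : p + 1 ≤ n) (X : Matrix (Fin N) (Fin N) A) :
    liftV n X p =
      onLegs (finShiftEmb p h) (X.submatrix (Equiv.funUnique _ _) (Equiv.funUnique _ _)) := by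
  ext v w
  simp only [liftV, onLegs_apply, of_apply, dif_pos (show p < n by omega), submatrix_apply,
    Equiv.funUnique_apply, Function.comp_apply, Fin.default_eq_zero,
    finShiftEmb_apply, mem_range_finShiftEmb, mul_ite, mul_one, mul_zero, Fin.isValue,
    Fin.val_zero, add_zero]
  exact if_congr (forall_congr' fun j => ⟨fun H hj => H (by omega),
    fun H h₁ => H (by omega)⟩) rfl rfl

lemma lift1_submatrix_eq_onLegs (X : Matrix (Fin N) (Fin N) A) :
    (lift1 X).submatrix (finTwoArrowEquiv _) (finTwoArrowEquiv _) =
      onLegs (finShiftEmb 0 (by norm_num : 0 + 1 ≤ 2))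
        (X.submatrix (Equiv.funUnique _ _) (Equiv.funUnique _ _)) := by
  ext v w
  simp [lift1, onLegs_apply, Fin.forall_fin_two]

lemma up12_submatrix_eq_onLegs (X : Matrix (Fin N × Fin N) (Fin N × Fin N) ℂ) :
    (up12 X).submatrix finThreeArrowEquiv finThreeArrowEquiv =
      onLegs (finShiftEmb 0 (by norm_num : 0 + 2 ≤ 3))
        (X.submatrix (finTwoArrowEquiv _) (finTwoArrowEquiv _)) := by
  ext v w
  simp [up12, onLegs_apply, Fin.forall_fin_succ]

lemma up23_submatrix_eq_onLegs (X : Matrix (Fin N × Fin N) (Fin N × Fin N) ℂ) :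
    (up23 X).submatrix finThreeArrowEquiv finThreeArrowEquiv =
      onLegs (finShiftEmb 1 (by norm_num : 1 + 2 ≤ 3))
        (X.submatrix (finTwoArrowEquiv _) (finTwoArrowEquiv _)) := by
  ext v w
  simp [up23, onLegs_apply, Fin.forall_fin_succ]

end Bridges

section Lift2

variable {N : ℕ} {A : Type} [Ring A]

noncomputable def lift2Hom (n p : ℕ) (h : p + 2 ≤ n) :
    Matrix (Fin N × Fin N) (Fin N × Fin N) A →* Matrix (Fin n → Fin N) (Fin n → Fin N) A where
  toFun X := lift2 n X p
  map_one' := by rw [lift2_eq_onLegs n p h, submatrix_one_equiv (finTwoArrowEquiv _), onLegs_one]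
  map_mul' X Y := by
    rw [lift2_eq_onLegs n p h, lift2_eq_onLegs n p h, lift2_eq_onLegs n p h,
      ← onLegs_mul, submatrix_mul_equiv]

@[simp] lemma lift2Hom_apply (n p : ℕ) (h : p + 2 ≤ n)
    (X : Matrix (Fin N × Fin N) (Fin N × Fin N) A) : lift2Hom n p h X = lift2 n X p := rfl

lemma lift2Hom_smul (n p : ℕ) (h : p + 2 ≤ n) (a : A)
    (X : Matrix (Fin N × Fin N) (Fin N × Fin N) A) :
    lift2Hom n p h (a • X) = a • lift2Hom n p h X := by
  rw [lift2Hom_apply, lift2Hom_apply, lift2_eq_onLegs n p h, lift2_eq_onLegs n p h,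
    ← onLegs_smul]
  rfl

lemma lift2_lift1 (n : ℕ) (h : 2 ≤ n) (X : Matrix (Fin N) (Fin N) A) :
    lift2 n (lift1 X) 0 = liftV n X 0 := by
  rw [lift2_eq_onLegs n 0 h, lift1_submatrix_eq_onLegs, onLegs_onLegs, finShiftEmb_trans,
    liftV_eq_onLegs n 0 (by omega)]

lemma lift2_relation_of_up {n p : ℕ} (h : p + 3 ≤ n) (φ : ℂ →+* A)
    {X Y Z X' Y' Z' : Matrix (Fin N × Fin N) (Fin N × Fin N) ℂ}
    (hrel : up12 X * up23 Y * up12 Z = up23 X' * up12 Y' * up23 Z') :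
    lift2 n (X.map φ) p * lift2 n (Y.map φ) (p + 1) * lift2 n (Z.map φ) p =
      lift2 n (X'.map φ) (p + 1) * lift2 n (Y'.map φ) p * lift2 n (Z'.map φ) (p + 1) := by
  let Φ (T : Matrix (Fin N × Fin N × Fin N) (Fin N × Fin N × Fin N) ℂ) :
      Matrix (Fin n → Fin N) (Fin n → Fin N) A :=
    onLegs (finShiftEmb p h) ((T.submatrix finThreeArrowEquiv finThreeArrowEquiv).map φ)
  have hΦ_mul : ∀ S T, Φ (S * T) = Φ S * Φ T := fun S T => by
    simp only [Φ, ← submatrix_mul_equiv S T _ finThreeArrowEquiv _, Matrix.map_mul, onLegs_mul]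
  have hΦ_up12 : ∀ W, Φ (up12 W) = lift2 n (W.map φ) p := fun W => by
    simp only [Φ, up12_submatrix_eq_onLegs, onLegs_map, onLegs_onLegs, finShiftEmb_trans,
      lift2_eq_onLegs n p (by omega), add_zero]
    rfl
  have hΦ_up23 : ∀ W, Φ (up23 W) = lift2 n (W.map φ) (p + 1) := fun W => by
    simp only [Φ, up23_submatrix_eq_onLegs, onLegs_map, onLegs_onLegs, finShiftEmb_trans,
      lift2_eq_onLegs n (p + 1) (by omega)]
    rfl
  simpa only [hΦ_mul, hΦ_up12, hΦ_up23] using congrArg Φ hrel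

lemma commute_lift2_onLegs {m n p q : ℕ} (hpq : p + m ≤ q) (hq : q + 2 ≤ n)
    {Z : Matrix (Fin N × Fin N) (Fin N × Fin N) A} (hZ : ∀ a b x, Commute (Z a b) x)
    (Y : Matrix (Fin m → Fin N) (Fin m → Fin N) A) :
    Commute (lift2 n Z q) (onLegs (finShiftEmb p (by omega : p + m ≤ n)) Y) := by
  rw [lift2_eq_onLegs n q hq]
  refine onLegs_commute (Set.disjoint_left.2 ?_) fun _ _ _ _ => hZ _ _ _
  simp only [mem_range_finShiftEmb]
  omega

lemma commute_lift2_copies {n q : ℕ} (hq : q + 2 ≤ n)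
    {Z : Matrix (Fin N × Fin N) (Fin N × Fin N) A} (hZ : ∀ a b x, Commute (Z a b) x)
    (FA FinvA : Matrix (Fin N × Fin N) (Fin N × Fin N) A) (X : Matrix (Fin N) (Fin N) A) :
    ∀ p, p + 1 ≤ q → Commute (lift2 n Z q) (copies n FA FinvA X p)
  | 0, hp => by
    rw [copies, liftV_eq_onLegs n 0 (by omega)]
    exact commute_lift2_onLegs hp hq hZ _
  | p + 1, hp => by
    rw [copies, lift2_eq_onLegs n p (by omega), lift2_eq_onLegs n p (by omega)]
    exact ((commute_lift2_onLegs (by omega) hq hZ _).mul_right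
      (commute_lift2_copies hq hZ FA FinvA X p (by omega))).mul_right
      (commute_lift2_onLegs (by omega) hq hZ _)

end Lift2

open ConjAct in
lemma shifted_relation_step {S K : Type*} [Monoid S] [SMul K S] [IsScalarTower K S S]
    [SMulCommClass K S S] (η : K) {f g : Sˣ} {r r' l m : S}
    (hbraid : f * g * f = g * f * g) (hcomp : ↑(f * g) * r = r' * ↑(f * g))
    (hl : Commute (g : S) l) (hm : Commute (g : S) m)
    (hrel : r * l * r * m = η • (m * (f * l * ↑f⁻¹))) :
    r' * (f * l * ↑f⁻¹) * r' * (f * m * ↑f⁻¹) =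
      η • (f * m * ↑f⁻¹ * (g * (f * l * ↑f⁻¹) * ↑g⁻¹)) := by
  have conj_def : ∀ (u : Sˣ) (x : S), ↑u * x * ↑u⁻¹ = toConjAct u • x := fun _ _ => rfl
  have fixed_of_commute : ∀ {x : S}, Commute (g : S) x → toConjAct g • x = x := fun h => by
    rw [← conj_def, h.eq, Units.mul_inv_cancel_right]
  have hr' : r' = toConjAct (f * g) • r := by rw [← conj_def, hcomp, Units.mul_inv_cancel_right]
  have hl' : toConjAct (f * g) • l = toConjAct f • l := by
    rw [map_mul, mul_smul, fixed_of_commute hl]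
  have hm' : toConjAct (f * g) • m = toConjAct f • m := by
    rw [map_mul, mul_smul, fixed_of_commute hm]
  have hfl : toConjAct (f * g) • toConjAct f • l = toConjAct g • toConjAct f • l := by
    rw [← mul_smul, ← map_mul, hbraid, map_mul, map_mul, mul_smul, mul_smul,
      fixed_of_commute hl]
  simp only [conj_def] at hrel ⊢
  calc r' * toConjAct f • l * r' * toConjAct f • m
      = toConjAct (f * g) • (r * l * r * m) := by
        rw [hr', smul_mul', smul_mul', smul_mul', hl', hm']
    _ = η • (toConjAct (f * g) • m * toConjAct (f * g) • toConjAct f • l) := by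
      rw [hrel, ← smul_comm η, smul_mul']
    _ = η • (toConjAct f • m * toConjAct g • toConjAct f • l) := by rw [hm', hfl]

lemma shifted_relation_zero {N : ℕ} {R F Finv : Matrix (Fin N × Fin N) (Fin N × Fin N) ℂ}
    {A : Type} [Ring A] [Algebra ℂ A] {η : ℂ} {L M : Matrix (Fin N) (Fin N) A}
    (hOFP : R.map (algebraMap ℂ A) * lift1 L * R.map (algebraMap ℂ A) * lift1 M
        = algebraMap ℂ A η
            • (lift1 M * (F.map (algebraMap ℂ A) * lift1 L * Finv.map (algebraMap ℂ A))))
    {n : ℕ} (h : 2 ≤ n) :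
    lift2 n (R.map (algebraMap ℂ A)) 0
        * copies n (F.map (algebraMap ℂ A)) (Finv.map (algebraMap ℂ A)) L 0
        * lift2 n (R.map (algebraMap ℂ A)) 0
        * copies n (F.map (algebraMap ℂ A)) (Finv.map (algebraMap ℂ A)) M 0
      = η • (copies n (F.map (algebraMap ℂ A)) (Finv.map (algebraMap ℂ A)) M 0
          * copies n (F.map (algebraMap ℂ A)) (Finv.map (algebraMap ℂ A)) L 1) := by
  have h₀ := congrArg (lift2Hom n 0 h) hOFP
  simp only [lift2Hom_smul, map_mul] at h₀
  simp only [lift2Hom_apply, lift2_lift1 n h, algebraMap_smul] at h₀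
  exact h₀

theorem shifted_relation {N n : ℕ} {A : Type} {K : Type*} [Ring A] [CommSemiring K] [Algebra K A]
    (η : K)
    {RA FA FinvA : Matrix (Fin N × Fin N) (Fin N × Fin N) A} {L M : Matrix (Fin N) (Fin N) A}
    (hF : FA * FinvA = 1 ∧ FinvA * FA = 1) (hF_central : ∀ a b x, Commute (FA a b) x)
    (hbraid : ∀ p, p + 3 ≤ n → lift2 n FA p * lift2 n FA (p + 1) * lift2 n FA p =
      lift2 n FA (p + 1) * lift2 n FA p * lift2 n FA (p + 1))
    (hcomp : ∀ p, p + 3 ≤ n → lift2 n FA p * lift2 n FA (p + 1) * lift2 n RA p =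
      lift2 n RA (p + 1) * lift2 n FA p * lift2 n FA (p + 1))
    (h₀ : lift2 n RA 0 * copies n FA FinvA L 0 * lift2 n RA 0 * copies n FA FinvA M 0 =
      η • (copies n FA FinvA M 0 * copies n FA FinvA L 1)) :
    ∀ p, p + 2 ≤ n →
      lift2 n RA p * copies n FA FinvA L p * lift2 n RA p * copies n FA FinvA M p =
        η • (copies n FA FinvA M p * copies n FA FinvA L (p + 1))
  | 0, _ => h₀
  | p + 1, h => by
    let f := Units.map (lift2Hom n p (by omega)) ⟨FA, FinvA, hF.1, hF.2⟩
    let g := Units.map (lift2Hom n (p + 1) h) ⟨FA, FinvA, hF.1, hF.2⟩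
    have hL : copies n FA FinvA L (p + 1) = f.val * copies n FA FinvA L p * (f⁻¹).val := rfl
    have hM : copies n FA FinvA M (p + 1) = f.val * copies n FA FinvA M p * (f⁻¹).val := rfl
    have hL' : copies n FA FinvA L (p + 2) = g.val * copies n FA FinvA L (p + 1) * (g⁻¹).val :=
      rfl
    rw [hL', hL, hM]
    refine shifted_relation_step η (Units.ext (hbraid p h)) ?_
      (commute_lift2_copies h hF_central _ _ L p le_rfl)
      (commute_lift2_copies h hF_central _ _ M p le_rfl)
      (shifted_relation η hF hF_central hbraid hcomp h₀ p (by omega))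
    rw [Units.val_mul, ← mul_assoc]
    exact hcomp p h

theorem ofp_shifted_general (N : ℕ)
    (R F Finv : Matrix (Fin N × Fin N) (Fin N × Fin N) ℂ)
    (hYBF : up12 F * up23 F * up12 F = up23 F * up12 F * up23 F)
    (hFinv : F * Finv = 1 ∧ Finv * F = 1)
    (hcomp : up12 R * up23 F * up12 F = up23 F * up12 F * up23 R
      ∧ up12 F * up23 F * up12 R = up23 R * up12 F * up23 F)
    (A : Type) [Ring A] [Algebra ℂ A] (η : ℂ)
    (L M : Matrix (Fin N) (Fin N) A)
    (hOFP : R.map (algebraMap ℂ A) * lift1 L * R.map (algebraMap ℂ A) * lift1 M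
        = algebraMap ℂ A η
            • (lift1 M * (F.map (algebraMap ℂ A) * lift1 L * Finv.map (algebraMap ℂ A)))) :
    ∀ k : ℕ, 1 ≤ k →
      lift2 (k + 1) (R.map (algebraMap ℂ A)) (k - 1)
          * copies (k + 1) (F.map (algebraMap ℂ A)) (Finv.map (algebraMap ℂ A)) L (k - 1)
          * lift2 (k + 1) (R.map (algebraMap ℂ A)) (k - 1)
          * copies (k + 1) (F.map (algebraMap ℂ A)) (Finv.map (algebraMap ℂ A)) M (k - 1)
        = algebraMap ℂ A η
            • (copies (k + 1) (F.map (algebraMap ℂ A)) (Finv.map (algebraMap ℂ A)) M (k - 1)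
              * copies (k + 1) (F.map (algebraMap ℂ A)) (Finv.map (algebraMap ℂ A)) L k) := by
  intro k hk
  obtain ⟨p, rfl⟩ := Nat.exists_eq_add_of_le' hk
  have hF : F.map (algebraMap ℂ A) * Finv.map (algebraMap ℂ A) = 1 ∧
      Finv.map (algebraMap ℂ A) * F.map (algebraMap ℂ A) = 1 := by
    simp only [← Matrix.map_mul, hFinv, Matrix.map_one _ (map_zero _) (map_one _), and_self]
  rw [algebraMap_smul]
  exact shifted_relation η hF (fun _ _ _ => Algebra.commutes _ _)
    (fun q hq => lift2_relation_of_up hq _ hYBF) (fun q hq => lift2_relation_of_up hq _ hcomp.2)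
    (shifted_relation_zero hOFP (by omega)) p (by omega)

/-- If `R₁L₁R₁M₁ = η·M₁L_{2̄}` with copies defined via `F`, then for every
`k ≥ 1` the shifted relation `R_k L_{k̄} R_k M_{k̄} = η·M_{k̄} L_{k+1‾}`
holds in `Mat_{N^{k+1}}(A)`. -/
theorem ofp_shifted (N : ℕ) (hN : 1 ≤ N)
    (R Rinv F Finv : Matrix (Fin N × Fin N) (Fin N × Fin N) ℂ)
    (hYBR : up12 R * up23 R * up12 R = up23 R * up12 R * up23 R)
    (hYBF : up12 F * up23 F * up12 F = up23 F * up12 F * up23 F)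
    (hRinv : R * Rinv = 1 ∧ Rinv * R = 1)
    (hFinv : F * Finv = 1 ∧ Finv * F = 1)
    (hcomp : up12 R * up23 F * up12 F = up23 F * up12 F * up23 R
      ∧ up12 F * up23 F * up12 R = up23 R * up12 F * up23 F)
    (A : Type) [Ring A] [Algebra ℂ A] (η : ℂ) (hη : η ≠ 0)
    (L M : Matrix (Fin N) (Fin N) A)
    (hOFP : R.map (algebraMap ℂ A) * lift1 L * R.map (algebraMap ℂ A) * lift1 M
        = algebraMap ℂ A η
            • (lift1 M * (F.map (algebraMap ℂ A) * lift1 L * Finv.map (algebraMap ℂ A)))) :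
    ∀ k : ℕ, 1 ≤ k →
      lift2 (k + 1) (R.map (algebraMap ℂ A)) (k - 1)
          * copies (k + 1) (F.map (algebraMap ℂ A)) (Finv.map (algebraMap ℂ A)) L (k - 1)
          * lift2 (k + 1) (R.map (algebraMap ℂ A)) (k - 1)
          * copies (k + 1) (F.map (algebraMap ℂ A)) (Finv.map (algebraMap ℂ A)) M (k - 1)
        = algebraMap ℂ A η
            • (copies (k + 1) (F.map (algebraMap ℂ A)) (Finv.map (algebraMap ℂ A)) M (k - 1)
              * copies (k + 1) (F.map (algebraMap ℂ A)) (Finv.map (algebraMap ℂ A)) L k) :=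
  ofp_shifted_general N R F Finv hYBF hFinv hcomp A η L M hOFP
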